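/- For every k ≥ 4 and every k-chordal graph G, the graph G′ with vertex set V(G) ∪ {w_u, w_v, u, v} and edge set E(G) ∪ {u w_u, v w_v} ∪ {w_u x, w_v x : x ∈ V(G)} is k-chordal and its center is exactly V(G). -/

import Mathlib

open SimpleGraph

variable {V : Type*}

noncomputable instance (priority := low) instFintypeSubsetOfFinite [Finite V] (s : Set V) :
    Fintype ↥s := Fintype.ofFinite _

/-- Eccentricity of a vertex: max distance to any vertex. -/
noncomputable def ecc [Fintype V] (G : SimpleGraph V) (x : V) : ℕ :=
  Finset.univ.sup (G.dist x)

/-- Radius: minimum eccentricity. -/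
noncomputable def grad [Fintype V] (G : SimpleGraph V) : ℕ :=
  sInf (Set.range (ecc G))

/-- Diameter: maximum eccentricity. -/
noncomputable def gdiam [Fintype V] (G : SimpleGraph V) : ℕ :=
  Finset.univ.sup (ecc G)

/-- The center: vertices of minimum eccentricity. -/
def center [Fintype V] (G : SimpleGraph V) : Set V :=
  {x | ecc G x = grad G}

/-- `G` has an induced cycle of length `n`. -/
def HasInducedCycle (G : SimpleGraph V) (n : ℕ) : Prop :=
  3 ≤ n ∧ ∃ f : ZMod n → V, Function.Injective f ∧
    ∀ i j : ZMod n, G.Adj (f i) (f j) ↔ (i = j + 1 ∨ j = i + 1)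

/-- `G` is `k`-chordal: no induced cycle of length greater than `k`. -/
def KChordal (G : SimpleGraph V) (k : ℕ) : Prop :=
  ∀ n, k < n → ¬ HasInducedCycle G n

/-- `G` together with `w_u, u, w_v, v` (encoded as `0, 1, 2, 3`): `w_u` and `w_v` are joined
to every vertex of `G`, `u` only to `w_u`, and `v` only to `w_v`. -/
def addFour (G : SimpleGraph V) : SimpleGraph (V ⊕ Fin 4) :=
  SimpleGraph.fromRel (fun x y => match x, y with
    | Sum.inl a, Sum.inl b => G.Adj a b
    | Sum.inr i, Sum.inl _ => i = 0 ∨ i = 2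
    | Sum.inr i, Sum.inr j => (i = 0 ∧ j = 1) ∨ (i = 2 ∧ j = 3)
    | _, _ => False)

/-! The pendant vertices `u` and `v` lie on no cycle. On an induced cycle of length at least
five every vertex has two non-neighbours, whereas once `u` and `v` are excluded `w_u` and `w_v`
have at most one non-neighbour each (one another); so every long induced cycle of `G′` lies in
`G`. Every vertex of `G` reaches all of `G′` in two steps through `w_u` or `w_v` and is not
adjacent to `u`, so it has eccentricity 2, while each added vertex is at distance at least 3 from
the pendant vertex on the other side. -/

open Sum

lemma ZMod.natCast_ne_zero_of_pos_of_lt {n c : ℕ} (h0 : 0 < c) (h : c < n) :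
    (c : ZMod n) ≠ 0 := by
  rw [Ne, ZMod.natCast_eq_zero_iff]
  exact Nat.not_dvd_of_pos_of_lt h0 h

section InducedCycle

variable {W : Type*} {H : SimpleGraph W} {n : ℕ}

def IsInducedCycle (H : SimpleGraph W) (f : ZMod n → W) : Prop :=
  Function.Injective f ∧ ∀ i j, H.Adj (f i) (f j) ↔ (i = j + 1 ∨ j = i + 1)

namespace IsInducedCycle

variable {f : ZMod n → W}

lemma adj_add_one (hc : IsInducedCycle H f) (i : ZMod n) : H.Adj (f i) (f (i + 1)) :=
  (hc.2 _ _).2 (Or.inr rfl)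

lemma apply_ne_of_neighborSet_subsingleton (hc : IsInducedCycle H f) (hn : 3 ≤ n) {x : W}
    (hx : (H.neighborSet x).Subsingleton) (i : ZMod n) : f i ≠ x := by
  rintro rfl
  have hsucc : H.Adj (f i) (f (i + 1)) := hc.adj_add_one i
  have hpred : H.Adj (f i) (f (i - 1)) := by simpa using (hc.adj_add_one (i - 1)).symm
  have h := hc.1 (hx hsucc hpred)
  exact ZMod.natCast_ne_zero_of_pos_of_lt (n := n) (c := 2) (by norm_num) (by omega)
    (by push_cast; linear_combination h)

lemma apply_ne_of_nonneighbors_subsingleton (hc : IsInducedCycle H f) (hn : 5 ≤ n) {x : W}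
    (hx : (Set.range f \ insert x (H.neighborSet x)).Subsingleton) (i : ZMod n) : f i ≠ x := by
  rintro rfl
  have hz : ∀ c : ℕ, 0 < c → c < n → (c : ZMod n) ≠ 0 := fun c h0 h ↦
    ZMod.natCast_ne_zero_of_pos_of_lt h0 h
  -- `f (i + 2)` and `f (i + 3)` are two distinct non-neighbours of `f i` on the cycle
  have hmem : ∀ c : ℕ, 2 ≤ c → c + 2 ≤ n →
      f (i + c) ∈ Set.range f \ insert (f i) (H.neighborSet (f i)) := by
    intro c h2 hcn
    refine ⟨⟨_, rfl⟩, ?_⟩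
    rintro (h | h)
    · exact hz c (by omega) (by omega) (by linear_combination hc.1 h)
    · rcases (hc.2 _ _).1 h with h | h
      · exact hz (c + 1) (by omega) (by omega) (by push_cast; linear_combination -h)
      · exact hz (c - 1) (by omega) (by omega)
          (by rw [Nat.cast_sub (by omega)]; push_cast; linear_combination h)
  have h := hc.1 (hx (hmem 2 le_rfl (by omega)) (hmem 3 (by norm_num) (by omega)))
  exact hz 1 (by norm_num) (by omega) (by push_cast at h ⊢; linear_combination -h)

lemma of_comp_embedding {V : Type*} {G : SimpleGraph V} (φ : G ↪g H) {g : ZMod n → V}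
    (hc : IsInducedCycle H (φ ∘ g)) : IsInducedCycle G g :=
  ⟨hc.1.of_comp, fun i j ↦ φ.map_adj_iff.symm.trans (hc.2 i j)⟩

end IsInducedCycle

end InducedCycle

section Eccentricity

variable {W : Type*} {H : SimpleGraph W} {x y z w : W}

lemma SimpleGraph.dist_le_two_of_adj_of_eq_or_adj (hxz : H.Adj x z) (hzy : z = y ∨ H.Adj z y) :
    H.dist x y ≤ 2 := by
  rcases hzy with rfl | hzy
  · exact (dist_le (.cons hxz .nil)).trans (by simp)
  · exact dist_le (.cons hxz (.cons hzy .nil))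

lemma SimpleGraph.Connected.two_lt_dist_of_neighborSet_subset (hconn : H.Connected)
    (hy : H.neighborSet y ⊆ {w}) (hxy : x ≠ y) (hxw : x ≠ w) (hnadj_w : ¬ H.Adj x w) :
    2 < H.dist x y := by
  have hnadj : ¬ H.Adj x y := fun h ↦ hxw (hy h.symm)
  have hcommon : H.commonNeighbors x y = ∅ := by
    refine Set.eq_empty_of_forall_notMem fun z hz ↦ ?_
    rw [mem_commonNeighbors, show z = w from hy hz.2] at hz
    exact hnadj_w hz.1
  have h := two_lt_edist_iff.2 ⟨hxy, hnadj, hcommon⟩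
  rwa [← (hconn x y).coe_dist_eq_edist, Nat.ofNat_lt_cast] at h

variable [Fintype W]

lemma dist_le_ecc (H : SimpleGraph W) (x y : W) : H.dist x y ≤ ecc H x :=
  Finset.le_sup (Finset.mem_univ y)

lemma center_eq_of_ecc {S : Set W} {r : ℕ} (hS : S.Nonempty) (hin : ∀ x ∈ S, ecc H x = r)
    (hout : ∀ x ∉ S, r < ecc H x) : _root_.center H = S := by
  have hecc : ∀ x, r ≤ ecc H x := fun x ↦ by
    by_cases hx : x ∈ S
    · exact (hin x hx).ge
    · exact (hout x hx).le
  obtain ⟨x₀, hx₀⟩ := hS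
  have hgrad : grad H = r := le_antisymm (Nat.sInf_le ⟨x₀, hin x₀ hx₀⟩)
    (le_csInf ⟨_, x₀, rfl⟩ (by rintro _ ⟨x, rfl⟩; exact hecc x))
  ext x
  by_cases hx : x ∈ S
  · simp [_root_.center, hgrad, hin x hx, hx]
  · simp [_root_.center, hgrad, (hout x hx).ne', hx]

end Eccentricity

section AddFour

variable (G : SimpleGraph V)

@[simp] lemma addFour_adj_inl_inl (a b : V) : (addFour G).Adj (inl a) (inl b) ↔ G.Adj a b := by
  simp only [addFour, fromRel_adj, ne_eq, inl.injEq]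
  exact ⟨fun h ↦ h.2.elim id .symm, fun h ↦ ⟨h.ne, .inl h⟩⟩

@[simp] lemma addFour_adj_inr_inl (i : Fin 4) (a : V) :
    (addFour G).Adj (inr i) (inl a) ↔ i = 0 ∨ i = 2 := by
  simp [addFour]

@[simp] lemma addFour_adj_inl_inr (i : Fin 4) (a : V) :
    (addFour G).Adj (inl a) (inr i) ↔ i = 0 ∨ i = 2 := by
  rw [adj_comm, addFour_adj_inr_inl]

@[simp] lemma addFour_adj_inr_inr (i j : Fin 4) :
    (addFour G).Adj (inr i) (inr j) ↔
      (i = 0 ∧ j = 1) ∨ (i = 2 ∧ j = 3) ∨ (i = 1 ∧ j = 0) ∨ (i = 3 ∧ j = 2) := by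
  simp only [addFour, fromRel_adj, ne_eq, inr.injEq]
  revert i j; decide

lemma addFour_neighborSet_inr_one : (addFour G).neighborSet (inr 1) = {inr 0} := by
  ext (a | j)
  · simp
  · fin_cases j <;> simp

lemma addFour_neighborSet_inr_three : (addFour G).neighborSet (inr 3) = {inr 2} := by
  ext (a | j)
  · simp
  · fin_cases j <;> simp

lemma addFour_connected [Nonempty V] : (addFour G).Connected := by
  obtain ⟨a⟩ := ‹Nonempty V›
  have hw : ∀ i : Fin 4, i = 0 ∨ i = 2 → (addFour G).Reachable (inl a) (inr i) :=
    fun i hi ↦ ((addFour_adj_inl_inr G i a).2 hi).reachable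
  rw [connected_iff_exists_forall_reachable]
  refine ⟨inl a, ?_⟩
  rintro (b | j)
  · exact (hw 0 (by simp)).trans (Adj.reachable (by simp))
  · fin_cases j
    · exact hw 0 (by simp)
    · exact (hw 0 (by simp)).trans (Adj.reachable (by simp))
    · exact hw 2 (by simp)
    · exact (hw 2 (by simp)).trans (Adj.reachable (by simp))

lemma IsInducedCycle.apply_mem_range_inl_addFour {n : ℕ} (hn : 5 ≤ n) {f : ZMod n → V ⊕ Fin 4}
    (hc : IsInducedCycle (addFour G) f) (i : ZMod n) : f i ∈ Set.range inl := by
  have h1 := hc.apply_ne_of_neighborSet_subsingleton (x := inr 1) (by omega)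
    (by simp [addFour_neighborSet_inr_one])
  have h3 := hc.apply_ne_of_neighborSet_subsingleton (x := inr 3) (by omega)
    (by simp [addFour_neighborSet_inr_three])
  have hnonadj : ∀ m m' : Fin 4, (m = 0 ∨ m = 2) →
      (∀ l : Fin 4, l ≠ 1 → l ≠ 3 → l ≠ m → ¬ (addFour G).Adj (inr m) (inr l) → l = m') →
      (Set.range f \ insert (inr m) ((addFour G).neighborSet (inr m))).Subsingleton := by
    intro m m' hm hm'
    refine (Set.subsingleton_singleton (a := inr m')).anti ?_
    rintro _ ⟨⟨j, rfl⟩, hj⟩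
    simp only [Set.mem_insert_iff, mem_neighborSet, not_or] at hj
    rcases hfj : f j with b | l
    · simp_all
    · rw [hfj] at hj
      exact congrArg inr (hm' l (fun h ↦ h1 j (h ▸ hfj)) (fun h ↦ h3 j (h ▸ hfj))
        (fun h ↦ hj.1 (h ▸ rfl)) hj.2)
  rcases hfi : f i with a | m
  · exact ⟨a, rfl⟩
  · fin_cases m
    · exact absurd hfi
        (hc.apply_ne_of_nonneighbors_subsingleton hn (hnonadj 0 2 (by simp) (by simp; decide)) i)
    · exact absurd hfi (h1 i)
    · exact absurd hfi
        (hc.apply_ne_of_nonneighbors_subsingleton hn (hnonadj 2 0 (by simp) (by simp; decide)) i)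
    · exact absurd hfi (h3 i)

def addFourInl : G ↪g addFour G where
  toEmbedding := Function.Embedding.inl
  map_rel_iff' := addFour_adj_inl_inl G _ _

lemma kChordal_addFour {k : ℕ} (hk : 4 ≤ k) (hch : KChordal G k) : KChordal (addFour G) k := by
  rintro n hkn ⟨hn, f, (hc : IsInducedCycle (addFour G) f)⟩
  choose g hg using hc.apply_mem_range_inl_addFour G (by omega)
  have hfg : f = addFourInl G ∘ g := funext fun i ↦ (hg i).symm
  exact hch n hkn ⟨hn, g, (hfg ▸ hc).of_comp_embedding (addFourInl G)⟩

lemma addFour_ecc_inl [Fintype V] [Nonempty V] (a : V) : ecc (addFour G) (inl a) = 2 := by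
  refine le_antisymm (Finset.sup_le fun y _ ↦ ?_) ?_
  · rcases y with b | j
    · exact dist_le_two_of_adj_of_eq_or_adj (z := inr 0) (by simp) (by simp)
    · fin_cases j
      · exact dist_le_two_of_adj_of_eq_or_adj (z := inr 0) (by simp) (by simp)
      · exact dist_le_two_of_adj_of_eq_or_adj (z := inr 0) (by simp) (by simp)
      · exact dist_le_two_of_adj_of_eq_or_adj (z := inr 2) (by simp) (by simp)
      · exact dist_le_two_of_adj_of_eq_or_adj (z := inr 2) (by simp) (by simp)
  · exact ((addFour_connected G).one_lt_dist_of_ne_of_not_adj (v := inr 1) (by simp)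
      (by simp)).trans_le (dist_le_ecc _ _ _)

lemma two_lt_addFour_ecc_inr [Fintype V] [Nonempty V] (i : Fin 4) :
    2 < ecc (addFour G) (inr i) := by
  have hfar : ∀ {y w}, (addFour G).neighborSet y ⊆ {w} → inr i ≠ y → inr i ≠ w →
      ¬ (addFour G).Adj (inr i) w → 2 < ecc (addFour G) (inr i) := fun hy hxy hxw hnadj ↦
    ((addFour_connected G).two_lt_dist_of_neighborSet_subset hy hxy hxw hnadj).trans_le
      (dist_le_ecc _ _ _)
  have hu := (addFour_neighborSet_inr_one G).subset
  have hv := (addFour_neighborSet_inr_three G).subset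
  fin_cases i
  · exact hfar hv (by simp) (by simp) (by simp)
  · exact hfar hv (by simp) (by simp) (by simp)
  · exact hfar hu (by simp) (by simp) (by simp)
  · exact hfar hu (by simp) (by simp) (by simp)

end AddFour

theorem addFour_center [Fintype V] [Nonempty V] (G : SimpleGraph V) (k : ℕ) (hk : 4 ≤ k)
    (hch : KChordal G k) :
    KChordal (addFour G) k ∧ _root_.center (addFour G) = Set.range Sum.inl := by
  refine ⟨kChordal_addFour G hk hch, center_eq_of_ecc (r := 2) (Set.range_nonempty inl) ?_ ?_⟩
  · rintro _ ⟨a, rfl⟩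
    exact addFour_ecc_inl G a
  · rintro (a | i) hx
    · exact absurd ⟨a, rfl⟩ hx
    · exact two_lt_addFour_ecc_inr G i
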